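/- Let r = (R_j)_{j≥1} be a generic sequence of radii and k ≥ 1. Let c, c' ∈ C(r) be two parameters with |c_j − c'_j| < R_j for all j ≥ 1 (so the sets B_j defined from c and from c' coincide). Then for all m ≥ 1 and all z ∈ ℂ_p: z satisfies f_c^{∘i}(z) ∈ B_0 for 0 ≤ i < m, f_c^{∘(m+i)}(z) ∈ A for 0 ≤ i < n_k, and f_c^{∘(m+n_k)}(z) ∈ B_k, if and only if z satisfies the same conditions with f_{c'} in place of f_c. -/
import Mathlib


noncomputable section

/-- `K` is a model of `ℂ_p`, the completion of an algebraic closure of `ℚ_p`: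
it is a complete, algebraically closed, nonarchimedean normed field whose norm
extends the `p`-adic absolute value and in which the algebraic elements over
`ℚ_p` are dense. -/
structure IsCp (p : ℕ) [Fact p.Prime] (K : Type*) [NormedField K] [Algebra ℚ_[p] K] : Prop where
  complete : CompleteSpace K
  norm_extends : ∀ x : ℚ_[p], ‖algebraMap ℚ_[p] K x‖ = ‖x‖
  isAlgClosed : IsAlgClosed K
  dense_algebraic : Dense {x : K | IsAlgebraic ℚ_[p] x}
  isNonarch : ∀ x y : K, ‖x + y‖ ≤ max ‖x‖ ‖y‖

/-- `ϱ = p^{-1/(p-1)}`. -/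
def rho (p : ℕ) : ℝ := (p : ℝ) ^ (-1 / ((p : ℝ) - 1))

/-- `R` is a sequence of radii: strictly increasing (for indices `≥ 1`),
with `R 1 > p`, tending to infinity. -/
def IsRadii (p : ℕ) (R : ℕ → ℝ) : Prop :=
  (∀ j, 1 ≤ j → R j < R (j + 1)) ∧ (p : ℝ) < R 1 ∧
    Filter.Tendsto R Filter.atTop Filter.atTop

/-- The piecewise-monomial map `φ`: for `R_{j-1} < t ≤ R_j` (with `R_0 := 0`),
`φ(t) = p (R_1 ⋯ R_{j-1})⁻¹ t^{p+j-1}`. -/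
def phi (p : ℕ) (R : ℕ → ℝ) (t : ℝ) : ℝ :=
  let j := sInf {j : ℕ | 1 ≤ j ∧ t ≤ R j}
  (p : ℝ) * (∏ i ∈ Finset.Icc 1 (j - 1), R i)⁻¹ * t ^ (p + j - 1)

/-- A generic sequence of radii. -/
def IsGenericRadii (p : ℕ) (R : ℕ → ℝ) : Prop :=
  IsRadii p R ∧ ∀ i j n : ℕ, 1 ≤ i → i < j → 1 ≤ n → (phi p R)^[n] (R i) ≠ R j

/-- Membership in the parameter space `C(r)`: `|c_j| = R_j` for all `j ≥ 1`. -/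
def InC (p : ℕ) [Fact p.Prime] {K : Type*} [NormedField K] (R : ℕ → ℝ) (c : ℕ → K) : Prop :=
  ∀ j, 1 ≤ j → ‖c j‖ = R j

/-- The transcendental entire map `f_c(z) = (z^p/p) ∏_{j ≥ 1} (1 - z/c_j)`. -/
def fc (p : ℕ) {K : Type*} [NormedField K] (c : ℕ → K) (z : K) : K :=
  z ^ p / (p : K) * ∏' j : ℕ, (1 - z / c (j + 1))

/-- The disk `B_0 = {|z| < 1}` for `j = 0`, and `B_j = {|z - c_j| < R_j}` for `j ≥ 1`. -/
def Bset {K : Type*} [NormedField K] (R : ℕ → ℝ) (c : ℕ → K) (j : ℕ) : Set K :=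
  if j = 0 then {z : K | ‖z‖ < 1} else {z : K | ‖z - c j‖ < R j}

/-- The set `A`, complement of all the disks `B_j`, `j ≥ 0`. -/
def Aset {K : Type*} [NormedField K] (R : ℕ → ℝ) (c : ℕ → K) : Set K :=
  (⋃ j, Bset R c j)ᶜ

/-- `n_j`, the minimal `n ≥ 1` with `R_j < φ^{∘(n+1)}(1)`. -/
def nseq (p : ℕ) (R : ℕ → ℝ) (j : ℕ) : ℕ :=
  sInf {n : ℕ | 1 ≤ n ∧ R j < (phi p R)^[n + 1] 1}

/-- `S_j = φ⁻¹(R_j)`. -/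
def Sse (p : ℕ) (R : ℕ → ℝ) (j : ℕ) : ℝ := Function.invFun (phi p R) (R j)

/-- `λ_j = φ(R_j)/R_j`. -/
def lam (p : ℕ) (R : ℕ → ℝ) (j : ℕ) : ℝ := phi p R (R j) / R j

/-- `L_k`: index of the first symbol of the `k`-th block `B_0^{m_k} A^{n_k} B_k^{…}`
of the itinerary `α(m, ℓ)`; `L_1 = 0` and `L_{k+1} = L_k + m_k + n_k + ℓ_{k+1}`. -/
def Lseq (m n l : ℕ → ℕ) : ℕ → ℕ
  | 0 => 0
  | 1 => 0
  | k + 2 => Lseq m n l (k + 1) + m (k + 1) + n (k + 1) + l (k + 2)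

/-- `N_k = L_k + m_k + n_k`, the index of the final symbol `B_k` of the truncated
itinerary `α^{(k)}` (so `α^{(k)}` has length `N_k + 1`). -/
def Nseq (m n l : ℕ → ℕ) (k : ℕ) : ℕ := Lseq m n l k + m k + n k

/-- The symbol (`some 0 = B_0`, `none = A`, `some k = B_k`) at position `i` of the
itinerary `α(m,ℓ) = B_0^{m_1} A^{n_1} B_1^{ℓ_2} B_0^{m_2} A^{n_2} B_2^{ℓ_3} ⋯`. -/
def itin (m n l : ℕ → ℕ) (i : ℕ) : Option ℕ :=
  let k := sSup {k : ℕ | 1 ≤ k ∧ Lseq m n l k ≤ i}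
  if i < Lseq m n l k + m k then some 0
  else if i < Lseq m n l k + m k + n k then none
  else some k

/-- The subset of `ℂ_p` corresponding to a symbol of the alphabet `{A, B_0, B_1, …}`. -/
def symbSet {K : Type*} [NormedField K] (R : ℕ → ℝ) (c : ℕ → K) : Option ℕ → Set K
  | none => Aset R c
  | some j => Bset R c j

/-- Condition (3.2) at `k`: `ϱ⁻¹ R_k p^{-m_k} λ_k^{ℓ_{k+1}} < 1`. -/
def Cond32 (p : ℕ) (R : ℕ → ℝ) (m l : ℕ → ℕ) (k : ℕ) : Prop :=
  (rho p)⁻¹ * R k * ((p : ℝ) ^ m k)⁻¹ * lam p R k ^ l (k + 1) < 1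

/-- Condition (3.3) for `k`: for all `2 ≤ j < k`,
`ε_k < ϱ^{k-j} R_k² (R_{j-1} S_{j-1})⁻¹ λ_{j-1}^{-ℓ_j}`. -/
def Cond33 (p : ℕ) (R : ℕ → ℝ) (ε : ℕ → ℝ) (l : ℕ → ℕ) (k : ℕ) : Prop :=
  ∀ j, 2 ≤ j → j < k →
    ε k < rho p ^ (k - j) * R k ^ 2 * (R (j - 1) * Sse p R (j - 1))⁻¹ *
      (lam p R (j - 1) ^ l j)⁻¹

/-- Condition (3.4) for `k`: for all `2 ≤ j ≤ k`,
`ϱ^{-2} R_{j-1} S_{j-1} λ_{j-1}^{ℓ_j} p^{-m_j} < 1`. -/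
def Cond34 (p : ℕ) (R : ℕ → ℝ) (m l : ℕ → ℕ) (k : ℕ) : Prop :=
  ∀ j, 2 ≤ j → j ≤ k →
    ((rho p) ^ 2)⁻¹ * (R (j - 1) * Sse p R (j - 1)) * lam p R (j - 1) ^ l j *
      ((p : ℝ) ^ m j)⁻¹ < 1

/-- Condition (3.5) at `k`: `p ϱ⁻¹ R_{k+1}² S_k⁻¹ λ_k^{-ℓ_{k+1}} < ε_{k+1}`. -/
def Cond35 (p : ℕ) (R : ℕ → ℝ) (ε : ℕ → ℝ) (l : ℕ → ℕ) (k : ℕ) : Prop :=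
  (p : ℝ) * (rho p)⁻¹ * R (k + 1) ^ 2 * (Sse p R k)⁻¹ * (lam p R k ^ l (k + 1))⁻¹ < ε (k + 1)

/-- `c' ∈ Δ_k(c, ε)`. -/
def InDelta (p : ℕ) [Fact p.Prime] {K : Type*} [NormedField K] (R : ℕ → ℝ) (c : ℕ → K)
    (ε : ℕ → ℝ) (k : ℕ) (c' : ℕ → K) : Prop :=
  InC p R c' ∧ (∀ j, 1 ≤ j → j < k → c' j = c j) ∧ ∀ j, k ≤ j → ‖c' j - c j‖ < ε j

/-- `c' ∈ U_k(c, ε)`. -/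
def InU (p : ℕ) [Fact p.Prime] {K : Type*} [NormedField K] (R : ℕ → ℝ) (c : ℕ → K)
    (k : ℕ) (ε : ℝ) (c' : ℕ → K) : Prop :=
  InC p R c' ∧ ‖c' k - c k‖ < ε ∧ ∀ j, 1 ≤ j → j ≠ k → c' j = c j


set_option maxHeartbeats 1000000

/-! ### Auxiliary lemmas -/

section NAAux

open Filter Finset

variable {K : Type*} [NormedField K]

lemma one_le_prod_real {ι : Type*} (s : Finset ι) (f : ι → ℝ)
    (h : ∀ i ∈ s, 1 ≤ f i) : 1 ≤ ∏ i ∈ s, f i := by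
  calc (1:ℝ) = ∏ i ∈ s, 1 := by simp
    _ ≤ ∏ i ∈ s, f i := Finset.prod_le_prod (fun i _ => zero_le_one) h

lemma prod_le_prod_subset_real {ι : Type*} {s t : Finset ι} (h : s ⊆ t) (f : ι → ℝ)
    (h1 : ∀ i ∈ t, 1 ≤ f i) : ∏ i ∈ s, f i ≤ ∏ i ∈ t, f i := by
  classical
  rw [← Finset.prod_sdiff h]
  have h2 : 1 ≤ ∏ i ∈ t \ s, f i :=
    one_le_prod_real _ _ (fun i hi => h1 i (Finset.mem_sdiff.mp hi).1)
  have h3 : 0 ≤ ∏ i ∈ s, f i :=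
    Finset.prod_nonneg fun i hi => le_trans zero_le_one (h1 i (h hi))
  nlinarith

lemma na_sub (hna : ∀ x y : K, ‖x + y‖ ≤ max ‖x‖ ‖y‖) (x y : K) :
    ‖x - y‖ ≤ max ‖x‖ ‖y‖ := by
  simpa [sub_eq_add_neg] using hna x (-y)

lemma na_add_eq (hna : ∀ x y : K, ‖x + y‖ ≤ max ‖x‖ ‖y‖) {x y : K} (h : ‖y‖ < ‖x‖) :
    ‖x + y‖ = ‖x‖ := by
  refine le_antisymm ((hna x y).trans_eq (max_eq_left h.le)) ?_
  have hx : ‖x‖ ≤ max ‖x + y‖ ‖y‖ := by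
    simpa using na_sub hna (x + y) y
  exact (le_max_iff.mp hx).resolve_right (not_le.mpr h)

lemma na_sum (hna : ∀ x y : K, ‖x + y‖ ≤ max ‖x‖ ‖y‖) {ι : Type*} (s : Finset ι)
    (f : ι → K) {B : ℝ} (hB : 0 ≤ B) (h : ∀ i ∈ s, ‖f i‖ ≤ B) :
    ‖∑ i ∈ s, f i‖ ≤ B := by
  classical
  revert h
  induction s using Finset.induction with
  | empty => intro _; simpa using hB
  | @insert a s ha ih =>
    intro h
    rw [Finset.sum_insert ha]
    exact (hna _ _).trans (max_le (h a (mem_insert_self _ _))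
      (ih fun i hi => h i (mem_insert_of_mem hi)))

lemma na_prod_sub_prod (hna : ∀ x y : K, ‖x + y‖ ≤ max ‖x‖ ‖y‖) {ι : Type*} (s : Finset ι)
    (x y : ι → K) (w : ι → ℝ) {C : ℝ} (hC : 0 ≤ C)
    (hx : ∀ i ∈ s, ‖x i‖ ≤ w i) (hy : ∀ i ∈ s, ‖y i‖ ≤ w i)
    (hxy : ∀ i ∈ s, ‖x i - y i‖ ≤ C * w i) :
    ‖∏ i ∈ s, x i - ∏ i ∈ s, y i‖ ≤ C * ∏ i ∈ s, w i := by
  classical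
  revert hx hy hxy
  induction s using Finset.induction with
  | empty => intro _ _ _; simpa using hC
  | @insert a s ha ih =>
    intro hx hy hxy
    have hw : ∀ i ∈ s, (0:ℝ) ≤ w i := fun i hi =>
      (norm_nonneg _).trans (hx i (mem_insert_of_mem hi))
    have hwa : 0 ≤ w a := (norm_nonneg _).trans (hx a (mem_insert_self _ _))
    have hwprod : (0:ℝ) ≤ ∏ i ∈ s, w i := Finset.prod_nonneg hw
    have ihs := ih (fun i hi => hx i (mem_insert_of_mem hi))
      (fun i hi => hy i (mem_insert_of_mem hi)) (fun i hi => hxy i (mem_insert_of_mem hi))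
    rw [Finset.prod_insert ha, Finset.prod_insert ha, Finset.prod_insert ha]
    have key : x a * ∏ i ∈ s, x i - y a * ∏ i ∈ s, y i
        = x a * (∏ i ∈ s, x i - ∏ i ∈ s, y i) + (x a - y a) * ∏ i ∈ s, y i := by ring
    rw [key]
    refine (hna _ _).trans (max_le ?_ ?_)
    · rw [norm_mul]
      calc ‖x a‖ * ‖∏ i ∈ s, x i - ∏ i ∈ s, y i‖
          ≤ w a * (C * ∏ i ∈ s, w i) :=
            mul_le_mul (hx a (mem_insert_self _ _)) ihs (norm_nonneg _) hwa
        _ = C * (w a * ∏ i ∈ s, w i) := by ring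
    · rw [norm_mul]
      have h1 : ‖∏ i ∈ s, y i‖ ≤ ∏ i ∈ s, w i := by
        rw [norm_prod]
        exact Finset.prod_le_prod (fun i _ => norm_nonneg _)
          (fun i hi => hy i (mem_insert_of_mem hi))
      calc ‖x a - y a‖ * ‖∏ i ∈ s, y i‖
          ≤ (C * w a) * ∏ i ∈ s, w i :=
            mul_le_mul (hxy a (mem_insert_self _ _)) h1 (norm_nonneg _)
              (mul_nonneg hC hwa)
        _ = C * (w a * ∏ i ∈ s, w i) := by ring

lemma na_multipliable (hna : ∀ x y : K, ‖x + y‖ ≤ max ‖x‖ ‖y‖) [CompleteSpace K]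
    {f : ℕ → K} (h : Filter.Tendsto (fun j => ‖f j - 1‖) atTop (nhds 0)) :
    Multipliable f := by
  classical
  obtain ⟨N₁, hN₁⟩ := eventually_atTop.mp (h.eventually (gt_mem_nhds one_pos))
  have hle1 : ∀ j, N₁ ≤ j → ‖f j‖ ≤ 1 := by
    intro j hj
    have h2 : f j = 1 + (f j - 1) := by ring
    rw [h2]
    exact (hna _ _).trans (max_le (le_of_eq norm_one) (hN₁ j hj).le)
  suffices hcs : CauchySeq (fun s : Finset ℕ => ∏ i ∈ s, f i) by
    obtain ⟨a, ha⟩ := cauchySeq_tendsto_of_complete hcs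
    exact ⟨a, ha⟩
  rw [Metric.cauchySeq_iff]
  intro ε hε
  have hB0 : (0:ℝ) ≤ ‖∏ i ∈ Finset.range N₁, f i‖ := norm_nonneg _
  set B := ‖∏ i ∈ Finset.range N₁, f i‖ with hBdef
  have hBpos : (0:ℝ) < B + 1 := by linarith
  have hC : 0 < ε / (B + 1) := div_pos hε hBpos
  obtain ⟨N₂', hN₂'⟩ := eventually_atTop.mp (h.eventually (gt_mem_nhds hC))
  set N₂ := max N₁ N₂' with hN₂def
  refine ⟨Finset.range N₂, ?_⟩
  intro s hs t ht
  replace hs : Finset.range N₂ ⊆ s := hs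
  replace ht : Finset.range N₂ ⊆ t := ht
  have hout : ∀ u : Finset ℕ, (∀ i ∈ u, N₂ ≤ i) →
      ‖∏ i ∈ u, f i - 1‖ ≤ ε / (B + 1) := by
    intro u hu
    have h3 := na_prod_sub_prod hna u f (fun _ => 1) (fun _ => 1) hC.le
      (fun i hi => hle1 i (le_trans (le_max_left _ _) (hu i hi)))
      (fun i _ => by simp)
      (fun i hi => by
        simpa using (hN₂' i (le_trans (le_max_right _ _) (hu i hi))).le)
    simpa using h3
  have hmemd : ∀ u : Finset ℕ, ∀ i ∈ u \ Finset.range N₂, N₂ ≤ i := by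
    intro u i hi
    have h4 := (Finset.mem_sdiff.mp hi).2
    simpa [Finset.mem_range, not_lt] using h4
  have hsplit : ∀ u : Finset ℕ, Finset.range N₂ ⊆ u →
      ∏ i ∈ u, f i = (∏ i ∈ Finset.range N₂, f i) * ∏ i ∈ u \ Finset.range N₂, f i := by
    intro u hu
    rw [mul_comm, Finset.prod_sdiff hu]
  have hB2 : ‖∏ i ∈ Finset.range N₂, f i‖ ≤ B := by
    rw [← Finset.prod_range_mul_prod_Ico f (le_max_left N₁ N₂'), norm_mul]
    have h5 : ‖∏ i ∈ Finset.Ico N₁ N₂, f i‖ ≤ 1 := by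
      rw [norm_prod]
      exact Finset.prod_le_one (fun i _ => norm_nonneg _)
        (fun i hi => hle1 i (Finset.mem_Ico.mp hi).1)
    calc ‖∏ i ∈ Finset.range N₁, f i‖ * ‖∏ i ∈ Finset.Ico N₁ N₂, f i‖
        ≤ B * 1 := mul_le_mul le_rfl h5 (norm_nonneg _) hB0
      _ = B := mul_one B
  rw [dist_eq_norm, hsplit s hs, hsplit t ht, ← mul_sub, norm_mul]
  have h2 : ‖∏ i ∈ s \ Finset.range N₂, f i - ∏ i ∈ t \ Finset.range N₂, f i‖
      ≤ ε / (B + 1) := by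
    have e1 := hout _ (hmemd s)
    have e2 := hout _ (hmemd t)
    have h6 : ∏ i ∈ s \ Finset.range N₂, f i - ∏ i ∈ t \ Finset.range N₂, f i
        = (∏ i ∈ s \ Finset.range N₂, f i - 1) - (∏ i ∈ t \ Finset.range N₂, f i - 1) := by
      ring
    rw [h6]
    exact (na_sub hna _ _).trans (max_le e1 e2)
  calc ‖∏ i ∈ Finset.range N₂, f i‖ *
        ‖∏ i ∈ s \ Finset.range N₂, f i - ∏ i ∈ t \ Finset.range N₂, f i‖
      ≤ B * (ε / (B + 1)) := mul_le_mul hB2 h2 (norm_nonneg _) hB0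
    _ < (B + 1) * (ε / (B + 1)) := mul_lt_mul_of_pos_right (lt_add_one B) hC
    _ = ε := by field_simp

lemma na_hasProd_tendsto {f : ℕ → K} (hf : Multipliable f) :
    Filter.Tendsto (fun s : Finset ℕ => ∏ i ∈ s, f i) atTop (nhds (∏' i, f i)) :=
  hf.hasProd

lemma na_norm_tprod_le {f : ℕ → K} (hf : Multipliable f) {W : ℝ}
    (h : ∀ s : Finset ℕ, ‖∏ i ∈ s, f i‖ ≤ W) : ‖∏' i, f i‖ ≤ W :=
  le_of_tendsto (na_hasProd_tendsto hf).norm (Filter.Eventually.of_forall h)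

lemma na_norm_tprod_eq {f : ℕ → K} (hf : Multipliable f) {W : ℝ} {N : ℕ}
    (h : ∀ s : Finset ℕ, Finset.range N ⊆ s → ‖∏ i ∈ s, f i‖ = W) :
    ‖∏' i, f i‖ = W := by
  refine tendsto_nhds_unique (na_hasProd_tendsto hf).norm ?_
  refine tendsto_const_nhds.congr' ?_
  filter_upwards [eventually_ge_atTop (Finset.range N)] with s hs
  exact (h s hs).symm

lemma na_norm_tprod_sub_le {f g : ℕ → K} (hf : Multipliable f) (hg : Multipliable g)
    {C : ℝ} (h : ∀ s : Finset ℕ, ‖∏ i ∈ s, f i - ∏ i ∈ s, g i‖ ≤ C) :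
    ‖∏' i, f i - ∏' i, g i‖ ≤ C :=
  le_of_tendsto ((na_hasProd_tendsto hf).sub (na_hasProd_tendsto hg)).norm
    (Filter.Eventually.of_forall h)

end NAAux

section RadiiAux

lemma IsRadii.mono {p : ℕ} {R : ℕ → ℝ} (hR : IsRadii p R) :
    ∀ i j, 1 ≤ i → i ≤ j → R i ≤ R j := by
  intro i j hi hij
  induction j, hij using Nat.le_induction with
  | base => exact le_rfl
  | succ n hn ih => exact ih.trans (hR.1 n (hi.trans hn)).le

lemma IsRadii.one_lt {p : ℕ} [Fact p.Prime] {R : ℕ → ℝ} (hR : IsRadii p R) :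
    ∀ j, 1 ≤ j → 1 < R j := by
  intro j hj
  have hp2 : (2:ℝ) ≤ (p:ℝ) := by exact_mod_cast (Fact.out : p.Prime).two_le
  have h1 := hR.mono 1 j le_rfl hj
  have h2 := hR.2.1
  linarith

lemma IsRadii.pos {p : ℕ} [Fact p.Prime] {R : ℕ → ℝ} (hR : IsRadii p R) :
    ∀ j, 1 ≤ j → 0 < R j := fun j hj => lt_trans one_pos (hR.one_lt j hj)

end RadiiAux

section SetAux

variable {K : Type*} [NormedField K] {R : ℕ → ℝ} {c : ℕ → K}

lemma mem_Bset_zero {z : K} : z ∈ Bset R c 0 ↔ ‖z‖ < 1 := by simp [Bset]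

lemma mem_Bset_of_ne {j : ℕ} (hj : j ≠ 0) {z : K} :
    z ∈ Bset R c j ↔ ‖z - c j‖ < R j := by simp [Bset, hj]

lemma Aset_norm_ge {z : K} (hz : z ∈ Aset R c) : 1 ≤ ‖z‖ := by
  have h0 : z ∉ Bset R c 0 := fun h => hz (Set.mem_iUnion.mpr ⟨0, h⟩)
  simpa [mem_Bset_zero, not_lt] using h0

lemma Aset_dist_ge {z : K} (hz : z ∈ Aset R c) (l : ℕ) (hl : l ≠ 0) :
    R l ≤ ‖z - c l‖ := by
  have h0 : z ∉ Bset R c l := fun h => hz (Set.mem_iUnion.mpr ⟨l, h⟩)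
  simpa [mem_Bset_of_ne hl, not_lt] using h0

end SetAux

section StepAux

open Filter Finset

variable {p : ℕ} [Fact p.Prime] {K : Type*} [NormedField K] {R : ℕ → ℝ} {c : ℕ → K}

lemma norm_factor_le (hna : ∀ x y : K, ‖x + y‖ ≤ max ‖x‖ ‖y‖) (hc : InC p R c)
    (z : K) (j : ℕ) : ‖1 - z / c (j + 1)‖ ≤ max 1 (‖z‖ / R (j + 1)) := by
  have h := na_sub hna 1 (z / c (j + 1))
  rwa [norm_one, norm_div, hc (j + 1) (Nat.le_add_left 1 j)] at h

lemma norm_factor_eq (hna : ∀ x y : K, ‖x + y‖ ≤ max ‖x‖ ‖y‖) (hR : IsRadii p R)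
    (hc : InC p R c) {z : K} (hz : z ∈ Bset R c 0 ∪ Aset R c) (j : ℕ) :
    ‖1 - z / c (j + 1)‖ = max 1 (‖z‖ / R (j + 1)) := by
  have hl : 1 ≤ j + 1 := Nat.le_add_left 1 j
  have hR1 : 1 < R (j + 1) := hR.one_lt _ hl
  have hRpos : 0 < R (j + 1) := by linarith
  have hcnorm : ‖c (j + 1)‖ = R (j + 1) := hc _ hl
  rcases lt_trichotomy ‖z‖ (R (j + 1)) with hlt | heq | hgt
  · have h2 : ‖(1:K) + -(z / c (j + 1))‖ = ‖(1:K)‖ := by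
      refine na_add_eq hna ?_
      rw [norm_neg, norm_one, norm_div, hcnorm]
      exact (div_lt_one hRpos).mpr hlt
    rw [max_eq_left ((div_le_one hRpos).mpr hlt.le)]
    simpa [sub_eq_add_neg] using h2
  · have hzA : z ∈ Aset R c := by
      rcases hz with hB | hA
      · exfalso
        have hz1 : ‖z‖ < 1 := mem_Bset_zero.mp hB
        linarith
      · exact hA
    have hc0 : c (j + 1) ≠ 0 := by
      intro h0; rw [h0, norm_zero] at hcnorm; linarith
    have hge : R (j + 1) ≤ ‖z - c (j + 1)‖ := Aset_dist_ge hzA (j + 1) (by omega)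
    have hle : ‖z - c (j + 1)‖ ≤ R (j + 1) := by
      have h3 := na_sub hna z (c (j + 1))
      rwa [hcnorm, heq, max_self] at h3
    have hfac : (1:K) - z / c (j + 1) = (c (j + 1) - z) / c (j + 1) := by
      field_simp
    rw [hfac, norm_div, hcnorm, norm_sub_rev, le_antisymm hle hge, heq,
      div_self (ne_of_gt hRpos), max_self]
  · have h1 : 1 < ‖z / c (j + 1)‖ := by
      rw [norm_div, hcnorm]; exact (one_lt_div hRpos).mpr hgt
    have h2 : ‖-(z / c (j + 1)) + 1‖ = ‖-(z / c (j + 1))‖ := by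
      refine na_add_eq hna ?_
      rwa [norm_neg, norm_one]
    have h3 : (1:K) - z / c (j + 1) = -(z / c (j + 1)) + 1 := by ring
    rw [h3, h2, norm_neg, norm_div, hcnorm,
      max_eq_right (le_of_lt ((one_lt_div hRpos).mpr hgt))]

lemma multipliable_factor (hna : ∀ x y : K, ‖x + y‖ ≤ max ‖x‖ ‖y‖) [CompleteSpace K]
    (hR : IsRadii p R) (hc : InC p R c) (z : K) :
    Multipliable (fun j : ℕ => 1 - z / c (j + 1)) := by
  refine na_multipliable hna ?_
  have he : (fun j : ℕ => ‖(1 - z / c (j + 1)) - 1‖) = fun j => ‖z‖ * (R (j + 1))⁻¹ := by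
    funext j
    rw [show (1 : K) - z / c (j + 1) - 1 = -(z / c (j + 1)) by ring, norm_neg, norm_div,
      hc (j + 1) (Nat.le_add_left 1 j), div_eq_mul_inv]
  rw [he]
  have h1 : Tendsto (fun j : ℕ => R (j + 1)) atTop atTop :=
    hR.2.2.comp (tendsto_add_atTop_nat 1)
  simpa using h1.inv_tendsto_atTop.const_mul ‖z‖

lemma norm_fc_eq (hna : ∀ x y : K, ‖x + y‖ ≤ max ‖x‖ ‖y‖) [CompleteSpace K]
    (hR : IsRadii p R) (hc : InC p R c) (hpn : ‖(p : K)‖ = (p : ℝ)⁻¹)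
    {z : K} (hz : z ∈ Bset R c 0 ∪ Aset R c) {N : ℕ}
    (hN : ∀ j, N ≤ j → ‖z‖ < R (j + 1)) :
    ‖∏' j : ℕ, (1 - z / c (j + 1))‖ = (∏ i ∈ Finset.range N, max 1 (‖z‖ / R (i + 1))) ∧
      ‖fc p c z‖ = (p : ℝ) * ‖z‖ ^ p * ∏ i ∈ Finset.range N, max 1 (‖z‖ / R (i + 1)) := by
  have hmult := multipliable_factor hna hR hc z
  have hPs : ∀ s : Finset ℕ, Finset.range N ⊆ s →
      ‖∏ i ∈ s, (1 - z / c (i + 1))‖ = ∏ i ∈ Finset.range N, max 1 (‖z‖ / R (i + 1)) := by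
    intro s hs
    rw [norm_prod]
    have h1 : ∀ i ∈ s, ‖1 - z / c (i + 1)‖ = max 1 (‖z‖ / R (i + 1)) :=
      fun i _ => norm_factor_eq hna hR hc hz i
    rw [Finset.prod_congr rfl h1]
    refine (Finset.prod_subset hs ?_).symm
    intro i _ hi
    have hNi : N ≤ i := by simpa [Finset.mem_range, not_lt] using hi
    have hRpos : 0 < R (i + 1) := hR.pos _ (Nat.le_add_left 1 i)
    rw [max_eq_left ((div_le_one hRpos).mpr (hN i hNi).le)]
  have hP := na_norm_tprod_eq hmult hPs
  refine ⟨hP, ?_⟩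
  simp only [fc]
  rw [norm_mul, norm_div, norm_pow, hpn, hP, div_eq_mul_inv, inv_inv]
  ring

lemma le_norm_fc (hna : ∀ x y : K, ‖x + y‖ ≤ max ‖x‖ ‖y‖) [CompleteSpace K]
    (hR : IsRadii p R) (hc : InC p R c) (hpn : ‖(p : K)‖ = (p : ℝ)⁻¹)
    {z : K} (hz : z ∈ Aset R c) : ‖z‖ ≤ ‖fc p c z‖ := by
  obtain ⟨N₀, hN₀⟩ := eventually_atTop.mp (hR.2.2.eventually_gt_atTop ‖z‖)
  have hN : ∀ j, N₀ ≤ j → ‖z‖ < R (j + 1) := fun j hj => hN₀ (j + 1) (by omega)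
  obtain ⟨-, h2⟩ := norm_fc_eq hna hR hc hpn (Or.inr hz) hN
  rw [h2]
  have ht1 : 1 ≤ ‖z‖ := Aset_norm_ge hz
  have hW : 1 ≤ ∏ i ∈ Finset.range N₀, max 1 (‖z‖ / R (i + 1)) :=
    one_le_prod_real _ _ fun i _ => le_max_left _ _
  have hp2 : (2:ℝ) ≤ (p:ℝ) := by exact_mod_cast (Fact.out : p.Prime).two_le
  have htp : ‖z‖ ≤ ‖z‖ ^ p := le_self_pow₀ ht1 (Fact.out : p.Prime).ne_zero
  have htp0 : (0:ℝ) ≤ ‖z‖ ^ p := pow_nonneg (norm_nonneg z) p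
  calc ‖z‖ ≤ ‖z‖ ^ p := htp
    _ = 1 * ‖z‖ ^ p * 1 := by ring
    _ ≤ (p : ℝ) * ‖z‖ ^ p * ∏ i ∈ Finset.range N₀, max 1 (‖z‖ / R (i + 1)) := by
        refine mul_le_mul ?_ hW zero_le_one (by positivity)
        exact mul_le_mul_of_nonneg_right (by linarith) htp0

lemma step_bound (hna : ∀ x y : K, ‖x + y‖ ≤ max ‖x‖ ‖y‖) [CompleteSpace K]
    (hR : IsRadii p R) {c' : ℕ → K} (hc : InC p R c) (hc' : InC p R c')
    (hclose : ∀ j, 1 ≤ j → ‖c j - c' j‖ < R j)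
    (hpn : ‖(p : K)‖ = (p : ℝ)⁻¹) {k : ℕ} (hk : 1 ≤ k) {e : ℝ}
    (he0 : (R 1)⁻¹ ≤ e) (he1 : e < 1)
    (he3 : ∀ l, 1 ≤ l → R l ≤ R 1 * R k → ‖c l - c' l‖ ≤ e * R l)
    {z z' : K} (hz : z ∈ Bset R c 0 ∪ Aset R c) (hzk : ‖z‖ ≤ R k)
    (hd : ‖z' - z‖ ≤ e * ‖z‖) :
    ‖fc p c' z' - fc p c z‖ ≤ e * ‖fc p c z‖ := by
  have hR1 : 1 < R 1 := hR.one_lt 1 le_rfl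
  have hepos : 0 ≤ e := le_trans (inv_pos.mpr (by linarith)).le he0
  have ht0 : 0 ≤ ‖z‖ := norm_nonneg z
  have hz'le : ‖z'‖ ≤ ‖z‖ := by
    have h1 : z' = z + (z' - z) := by ring
    rw [h1]
    exact (hna _ _).trans (max_le le_rfl (hd.trans (by nlinarith)))
  obtain ⟨N₀, hN₀⟩ := eventually_atTop.mp (hR.2.2.eventually_gt_atTop ‖z‖)
  have hN : ∀ j, N₀ ≤ j → ‖z‖ < R (j + 1) := fun j hj => hN₀ (j + 1) (by omega)
  obtain ⟨hPnorm, hfcnorm⟩ := norm_fc_eq hna hR hc hpn hz hN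
  have hW1 : (1:ℝ) ≤ ∏ i ∈ Finset.range N₀, max 1 (‖z‖ / R (i + 1)) :=
    one_le_prod_real _ _ fun i _ => le_max_left _ _
  have hW0 : (0:ℝ) ≤ ∏ i ∈ Finset.range N₀, max 1 (‖z‖ / R (i + 1)) := by linarith
  have hm := multipliable_factor hna hR hc z
  have hm' := multipliable_factor hna hR hc' z'
  have hw_one : ∀ i, N₀ ≤ i → max 1 (‖z‖ / R (i + 1)) = 1 := by
    intro i hi
    have hRpos : 0 < R (i + 1) := hR.pos _ (Nat.le_add_left 1 i)
    exact max_eq_left ((div_le_one hRpos).mpr (hN i hi).le)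
  have hprodw : ∀ s : Finset ℕ, (∏ i ∈ s, max 1 (‖z‖ / R (i + 1)))
      ≤ ∏ i ∈ Finset.range N₀, max 1 (‖z‖ / R (i + 1)) := by
    intro s
    classical
    calc ∏ i ∈ s, max 1 (‖z‖ / R (i + 1))
        ≤ ∏ i ∈ s ∪ Finset.range N₀, max 1 (‖z‖ / R (i + 1)) :=
          prod_le_prod_subset_real Finset.subset_union_left _
            (fun i _ => le_max_left _ _)
      _ = ∏ i ∈ Finset.range N₀, max 1 (‖z‖ / R (i + 1)) := by
          refine (Finset.prod_subset Finset.subset_union_right ?_).symm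
          intro i _ hni
          exact hw_one i (by simpa [Finset.mem_range, not_lt] using hni)
  have hfac_le : ∀ i : ℕ, ‖1 - z / c (i + 1)‖ ≤ max 1 (‖z‖ / R (i + 1)) :=
    fun i => norm_factor_le hna hc z i
  have hfac'_le : ∀ i : ℕ, ‖1 - z' / c' (i + 1)‖ ≤ max 1 (‖z‖ / R (i + 1)) := by
    intro i
    refine (norm_factor_le hna hc' z' i).trans ?_
    have hRpos : 0 < R (i + 1) := hR.pos _ (Nat.le_add_left 1 i)
    exact max_le_max le_rfl ((div_le_div_iff_of_pos_right hRpos).mpr hz'le)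
  have hfac_diff : ∀ i : ℕ,
      ‖(1 - z' / c' (i + 1)) - (1 - z / c (i + 1))‖ ≤ e * max 1 (‖z‖ / R (i + 1)) := by
    intro i
    have hl : 1 ≤ i + 1 := Nat.le_add_left 1 i
    have hRpos : 0 < R (i + 1) := hR.pos _ hl
    have hcnorm : ‖c (i + 1)‖ = R (i + 1) := hc _ hl
    have hcnorm' : ‖c' (i + 1)‖ = R (i + 1) := hc' _ hl
    have hc0 : c (i + 1) ≠ 0 := by intro h0; rw [h0, norm_zero] at hcnorm; linarith
    have hc0' : c' (i + 1) ≠ 0 := by intro h0; rw [h0, norm_zero] at hcnorm'; linarith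
    have hkey : (1 - z' / c' (i + 1)) - (1 - z / c (i + 1))
        = ((z - z') * c (i + 1) + z * (c' (i + 1) - c (i + 1))) / (c (i + 1) * c' (i + 1)) := by
      field_simp
      ring
    rw [hkey, norm_div, norm_mul, hcnorm, hcnorm']
    have hnum : ‖(z - z') * c (i + 1) + z * (c' (i + 1) - c (i + 1))‖
        ≤ max (e * ‖z‖ * R (i + 1)) (‖z‖ * ‖c (i + 1) - c' (i + 1)‖) := by
      refine (hna _ _).trans (max_le_max ?_ ?_)
      · calc ‖(z - z') * c (i + 1)‖ = ‖z' - z‖ * R (i + 1) := by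
              rw [norm_mul, hcnorm, norm_sub_rev]
          _ ≤ e * ‖z‖ * R (i + 1) := mul_le_mul_of_nonneg_right hd hRpos.le
      · exact le_of_eq (by rw [norm_mul, norm_sub_rev])
    have hzw : ‖z‖ ≤ max 1 (‖z‖ / R (i + 1)) * R (i + 1) := by
      have h6 : ‖z‖ / R (i + 1) ≤ max 1 (‖z‖ / R (i + 1)) := le_max_right _ _
      calc ‖z‖ = ‖z‖ / R (i + 1) * R (i + 1) := by field_simp
        _ ≤ max 1 (‖z‖ / R (i + 1)) * R (i + 1) :=
            mul_le_mul_of_nonneg_right h6 hRpos.le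
    rw [div_le_iff₀ (mul_pos hRpos hRpos)]
    by_cases hcase : R (i + 1) ≤ R 1 * R k
    · have hε : ‖c (i + 1) - c' (i + 1)‖ ≤ e * R (i + 1) := he3 (i + 1) hl hcase
      have hnum2 : ‖(z - z') * c (i + 1) + z * (c' (i + 1) - c (i + 1))‖
          ≤ e * ‖z‖ * R (i + 1) := by
        refine hnum.trans (max_le le_rfl ?_)
        nlinarith [mul_le_mul_of_nonneg_left hε ht0]
      calc ‖(z - z') * c (i + 1) + z * (c' (i + 1) - c (i + 1))‖
          ≤ e * ‖z‖ * R (i + 1) := hnum2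
        _ ≤ e * (max 1 (‖z‖ / R (i + 1)) * R (i + 1)) * R (i + 1) := by
            have h7 : 0 ≤ e * R (i + 1) := mul_nonneg hepos hRpos.le
            nlinarith [mul_le_mul_of_nonneg_left hzw hepos]
        _ = e * max 1 (‖z‖ / R (i + 1)) * (R (i + 1) * R (i + 1)) := by ring
    · push_neg at hcase
      have hRk0 : 0 < R k := hR.pos k hk
      have htlt : ‖z‖ < R (i + 1) := by nlinarith
      have hwi : max 1 (‖z‖ / R (i + 1)) = 1 :=
        max_eq_left ((div_le_one hRpos).mpr htlt.le)
      rw [hwi]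
      have h1 : e * ‖z‖ * R (i + 1) ≤ e * 1 * (R (i + 1) * R (i + 1)) := by
        nlinarith [mul_le_mul_of_nonneg_left htlt.le (mul_nonneg hepos hRpos.le)]
      have h3 : ‖z‖ ≤ e * R (i + 1) := by
        have hR1pos : (0:ℝ) < R 1 := by linarith
        have ht1R : ‖z‖ * R 1 ≤ R (i + 1) := by
          have h9 := mul_le_mul_of_nonneg_right hzk (by linarith : (0:ℝ) ≤ R 1)
          nlinarith
        calc ‖z‖ ≤ R (i + 1) / R 1 := by rw [le_div_iff₀ hR1pos]; exact ht1R
          _ = R (i + 1) * (R 1)⁻¹ := by rw [div_eq_mul_inv]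
          _ ≤ R (i + 1) * e := mul_le_mul_of_nonneg_left he0 hRpos.le
          _ = e * R (i + 1) := mul_comm _ _
      have h2 : ‖z‖ * ‖c (i + 1) - c' (i + 1)‖ ≤ e * 1 * (R (i + 1) * R (i + 1)) := by
        have hεlt : ‖c (i + 1) - c' (i + 1)‖ ≤ R (i + 1) := (hclose (i + 1) hl).le
        calc ‖z‖ * ‖c (i + 1) - c' (i + 1)‖ ≤ (e * R (i + 1)) * R (i + 1) :=
            mul_le_mul h3 hεlt (norm_nonneg _) (mul_nonneg hepos hRpos.le)
          _ = e * 1 * (R (i + 1) * R (i + 1)) := by ring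
      exact hnum.trans (max_le h1 h2)
  have hP'le : ‖∏' j : ℕ, (1 - z' / c' (j + 1))‖
      ≤ ∏ i ∈ Finset.range N₀, max 1 (‖z‖ / R (i + 1)) := by
    refine na_norm_tprod_le hm' (fun s => ?_)
    rw [norm_prod]
    calc ∏ i ∈ s, ‖1 - z' / c' (i + 1)‖ ≤ ∏ i ∈ s, max 1 (‖z‖ / R (i + 1)) :=
        Finset.prod_le_prod (fun i _ => norm_nonneg _) (fun i _ => hfac'_le i)
      _ ≤ _ := hprodw s
  have hPP' : ‖(∏' j : ℕ, (1 - z' / c' (j + 1))) - ∏' j : ℕ, (1 - z / c (j + 1))‖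
      ≤ e * ∏ i ∈ Finset.range N₀, max 1 (‖z‖ / R (i + 1)) := by
    refine na_norm_tprod_sub_le hm' hm (fun s => ?_)
    have h8 := na_prod_sub_prod hna s (fun i => 1 - z' / c' (i + 1))
      (fun i => 1 - z / c (i + 1)) (fun i => max 1 (‖z‖ / R (i + 1))) hepos
      (fun i _ => hfac'_le i) (fun i _ => hfac_le i) (fun i _ => hfac_diff i)
    exact h8.trans (mul_le_mul_of_nonneg_left (hprodw s) hepos)
  have hsplit : fc p c' z' - fc p c z
      = (z' ^ p - z ^ p) / (p : K) * (∏' j : ℕ, (1 - z' / c' (j + 1)))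
        + z ^ p / (p : K) * ((∏' j : ℕ, (1 - z' / c' (j + 1)))
          - ∏' j : ℕ, (1 - z / c (j + 1))) := by
    simp only [fc]
    ring
  have hzz : ‖z' ^ p - z ^ p‖ ≤ e * ‖z‖ ^ p := by
    have hppos := (Fact.out : p.Prime).pos
    have hsum : ‖∑ i ∈ Finset.range p, z' ^ i * z ^ (p - 1 - i)‖ ≤ ‖z‖ ^ (p - 1) := by
      refine na_sum hna _ _ (pow_nonneg ht0 _) ?_
      intro i hi
      rw [norm_mul, norm_pow, norm_pow]
      have h1 : ‖z'‖ ^ i ≤ ‖z‖ ^ i := pow_le_pow_left₀ (norm_nonneg _) hz'le i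
      calc ‖z'‖ ^ i * ‖z‖ ^ (p - 1 - i) ≤ ‖z‖ ^ i * ‖z‖ ^ (p - 1 - i) :=
          mul_le_mul_of_nonneg_right h1 (pow_nonneg ht0 _)
        _ = ‖z‖ ^ (p - 1) := by
          rw [← pow_add]
          congr 1
          have h9 : i < p := Finset.mem_range.mp hi
          omega
    have heq : z' ^ p - z ^ p
        = (∑ i ∈ Finset.range p, z' ^ i * z ^ (p - 1 - i)) * (z' - z) :=
      (geom_sum₂_mul z' z p).symm
    rw [heq, norm_mul]
    have hpp : p - 1 + 1 = p := by omega
    calc ‖∑ i ∈ Finset.range p, z' ^ i * z ^ (p - 1 - i)‖ * ‖z' - z‖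
        ≤ ‖z‖ ^ (p - 1) * (e * ‖z‖) :=
        mul_le_mul hsum hd (norm_nonneg _) (pow_nonneg ht0 _)
      _ = e * ‖z‖ ^ (p - 1 + 1) := by rw [pow_succ]; ring
      _ = e * ‖z‖ ^ p := by rw [hpp]
  have hterm1 : ‖(z' ^ p - z ^ p) / (p : K) * (∏' j : ℕ, (1 - z' / c' (j + 1)))‖
      ≤ e * ((p : ℝ) * ‖z‖ ^ p * ∏ i ∈ Finset.range N₀, max 1 (‖z‖ / R (i + 1))) := by
    rw [norm_mul, norm_div, hpn, div_eq_mul_inv, inv_inv]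
    have hp0 : (0:ℝ) ≤ (p : ℝ) := Nat.cast_nonneg p
    calc ‖z' ^ p - z ^ p‖ * (p : ℝ) * ‖∏' j : ℕ, (1 - z' / c' (j + 1))‖
        ≤ (e * ‖z‖ ^ p) * (p : ℝ)
          * ∏ i ∈ Finset.range N₀, max 1 (‖z‖ / R (i + 1)) := by
          refine mul_le_mul (mul_le_mul_of_nonneg_right hzz hp0) hP'le (norm_nonneg _) ?_
          exact mul_nonneg (mul_nonneg hepos (pow_nonneg ht0 _)) hp0
      _ = e * ((p : ℝ) * ‖z‖ ^ p * ∏ i ∈ Finset.range N₀, max 1 (‖z‖ / R (i + 1))) := by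
          ring
  have hterm2 : ‖z ^ p / (p : K) * ((∏' j : ℕ, (1 - z' / c' (j + 1)))
        - ∏' j : ℕ, (1 - z / c (j + 1)))‖
      ≤ e * ((p : ℝ) * ‖z‖ ^ p * ∏ i ∈ Finset.range N₀, max 1 (‖z‖ / R (i + 1))) := by
    rw [norm_mul, norm_div, hpn, div_eq_mul_inv, inv_inv, norm_pow]
    have hp0 : (0:ℝ) ≤ ‖z‖ ^ p * (p : ℝ) :=
      mul_nonneg (pow_nonneg ht0 _) (Nat.cast_nonneg p)
    calc ‖z‖ ^ p * (p : ℝ) * ‖(∏' j : ℕ, (1 - z' / c' (j + 1)))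
          - ∏' j : ℕ, (1 - z / c (j + 1))‖
        ≤ ‖z‖ ^ p * (p : ℝ)
          * (e * ∏ i ∈ Finset.range N₀, max 1 (‖z‖ / R (i + 1))) :=
          mul_le_mul_of_nonneg_left hPP' hp0
      _ = e * ((p : ℝ) * ‖z‖ ^ p * ∏ i ∈ Finset.range N₀, max 1 (‖z‖ / R (i + 1))) := by
          ring
  rw [hsplit, hfcnorm]
  exact (hna _ _).trans (max_le hterm1 hterm2)

lemma forward_dir (hna : ∀ x y : K, ‖x + y‖ ≤ max ‖x‖ ‖y‖) [CompleteSpace K]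
    (hR : IsRadii p R) {k : ℕ} (hk : 1 ≤ k)
    {c' : ℕ → K} (hc : InC p R c) (hc' : InC p R c')
    (hclose : ∀ j, 1 ≤ j → ‖c j - c' j‖ < R j)
    (hpn : ‖(p : K)‖ = (p : ℝ)⁻¹) (m : ℕ) (z : K)
    (H1 : ∀ i, i < m → (fc p c)^[i] z ∈ Bset R c 0)
    (H2 : ∀ i, i < nseq p R k → (fc p c)^[m + i] z ∈ Aset R c)
    (H3 : (fc p c)^[m + nseq p R k] z ∈ Bset R c k) :
    (∀ i, i < m → (fc p c')^[i] z ∈ Bset R c 0) ∧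
      (∀ i, i < nseq p R k → (fc p c')^[m + i] z ∈ Aset R c) ∧
      (fc p c')^[m + nseq p R k] z ∈ Bset R c k := by
  have hk0 : k ≠ 0 := by omega
  set n := nseq p R k with hn
  have hRk1 : 1 < R k := hR.one_lt k hk
  have hRk0 : 0 < R k := by linarith
  have hmem : ∀ i, i < m + n → (fc p c)^[i] z ∈ Bset R c 0 ∪ Aset R c := by
    intro i hi
    rcases lt_or_ge i m with h | h
    · exact Or.inl (H1 i h)
    · have h4 : i = m + (i - m) := by omega
      rw [h4]
      exact Or.inr (H2 (i - m) (by omega))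
  have hfinal : ‖(fc p c)^[m + n] z - c k‖ < R k := (mem_Bset_of_ne hk0).mp H3
  have hfn : ‖(fc p c)^[m + n] z‖ = R k := by
    have h1 : (fc p c)^[m + n] z = c k + ((fc p c)^[m + n] z - c k) := by ring
    rw [h1, na_add_eq hna (by rw [hc k hk]; exact hfinal), hc k hk]
  have hle : ∀ d, d ≤ n → ‖(fc p c)^[m + n - d] z‖ ≤ R k := by
    intro d
    induction d with
    | zero => intro _; simpa using hfn.le
    | succ d ih =>
      intro hd
      have hidx : m + n - (d + 1) = m + (n - (d + 1)) := by omega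
      have hiA : (fc p c)^[m + n - (d + 1)] z ∈ Aset R c := by
        rw [hidx]; exact H2 _ (by omega)
      have h2 : ‖(fc p c)^[m + n - (d + 1)] z‖
          ≤ ‖(fc p c)^[(m + n - (d + 1)) + 1] z‖ := by
        rw [Function.iterate_succ_apply']
        exact le_norm_fc hna hR hc hpn hiA
      have h3 : (m + n - (d + 1)) + 1 = m + n - d := by omega
      rw [h3] at h2
      exact h2.trans (ih (by omega))
  have hnorm : ∀ i, i ≤ m + n → ‖(fc p c)^[i] z‖ ≤ R k := by
    intro i hi
    rcases lt_or_ge i m with him | him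
    · have h5 := mem_Bset_zero.mp (H1 i him)
      linarith
    · have h1 : i = m + n - (m + n - i) := by omega
      rw [h1]
      exact hle (m + n - i) (by omega)
  obtain ⟨J₀, hJ₀⟩ := Filter.eventually_atTop.mp (hR.2.2.eventually_gt_atTop (R 1 * R k))
  set J := max J₀ 1 with hJdef
  have hJ1 : 1 ≤ J := le_max_right _ _
  have hne : (Finset.Icc 1 J).Nonempty := ⟨1, Finset.mem_Icc.mpr ⟨le_rfl, hJ1⟩⟩
  set E := (Finset.Icc 1 J).sup' hne (fun l => ‖c l - c' l‖ / R l) with hE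
  set e := max (R 1)⁻¹ E with he
  have hR1 : 1 < R 1 := hR.one_lt 1 le_rfl
  have he0 : (R 1)⁻¹ ≤ e := le_max_left _ _
  have he1 : e < 1 := by
    refine max_lt (inv_lt_one_of_one_lt₀ hR1) ?_
    rw [hE, Finset.sup'_lt_iff]
    intro l hl
    have h1 : 1 ≤ l := (Finset.mem_Icc.mp hl).1
    exact (div_lt_one (hR.pos l h1)).mpr (hclose l h1)
  have hepos : 0 ≤ e := le_trans (inv_pos.mpr (by linarith)).le he0
  have he3 : ∀ l, 1 ≤ l → R l ≤ R 1 * R k → ‖c l - c' l‖ ≤ e * R l := by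
    intro l hl hcase
    have hlJ : l ≤ J := by
      by_contra hcon
      push_neg at hcon
      have h5 := hJ₀ l (by omega)
      linarith
    have hmem2 : l ∈ Finset.Icc 1 J := Finset.mem_Icc.mpr ⟨hl, hlJ⟩
    have h6 : ‖c l - c' l‖ / R l ≤ E := Finset.le_sup' (fun l => ‖c l - c' l‖ / R l) hmem2
    have hRp := hR.pos l hl
    have h2 : ‖c l - c' l‖ / R l ≤ e := h6.trans (le_max_right _ _)
    calc ‖c l - c' l‖ = ‖c l - c' l‖ / R l * R l := by field_simp
      _ ≤ e * R l := mul_le_mul_of_nonneg_right h2 hRp.le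
  have hinv : ∀ i, i ≤ m + n →
      ‖(fc p c')^[i] z - (fc p c)^[i] z‖ ≤ e * ‖(fc p c)^[i] z‖ := by
    intro i
    induction i with
    | zero => intro _; simpa using mul_nonneg hepos (norm_nonneg z)
    | succ i ih =>
      intro hi
      have h1 := ih (by omega)
      rw [Function.iterate_succ_apply', Function.iterate_succ_apply']
      exact step_bound hna hR hc hc' hclose hpn hk he0 he1 he3
        (hmem i (by omega)) (hnorm i (by omega)) h1
  refine ⟨?_, ?_, ?_⟩
  · intro i him
    have h1 := hinv i (by omega)
    have h2 : ‖(fc p c)^[i] z‖ < 1 := mem_Bset_zero.mp (H1 i him)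
    rw [mem_Bset_zero]
    have h3 : (fc p c')^[i] z
        = (fc p c)^[i] z + ((fc p c')^[i] z - (fc p c)^[i] z) := by ring
    have h4 : ‖(fc p c')^[i] z‖ ≤ ‖(fc p c)^[i] z‖ := by
      rw [h3]
      exact (hna _ _).trans (max_le le_rfl
        (h1.trans (mul_le_of_le_one_left (norm_nonneg _) he1.le)))
    exact lt_of_le_of_lt h4 h2
  · intro i hin
    have hAz : (fc p c)^[m + i] z ∈ Aset R c := H2 i hin
    have h1 := hinv (m + i) (by omega)
    have ht1 : 1 ≤ ‖(fc p c)^[m + i] z‖ := Aset_norm_ge hAz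
    have hdlt : ‖(fc p c')^[m + i] z - (fc p c)^[m + i] z‖ < ‖(fc p c)^[m + i] z‖ :=
      lt_of_le_of_lt h1 (by nlinarith)
    simp only [Aset, Set.mem_compl_iff, Set.mem_iUnion, not_exists]
    intro l
    rcases Nat.eq_zero_or_pos l with rfl | hl
    · rw [mem_Bset_zero, not_lt]
      have h3 : (fc p c')^[m + i] z
          = (fc p c)^[m + i] z + ((fc p c')^[m + i] z - (fc p c)^[m + i] z) := by ring
      rw [h3, na_add_eq hna hdlt]
      exact ht1
    · rw [mem_Bset_of_ne (by omega), not_lt]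
      have hge : R l ≤ ‖(fc p c)^[m + i] z - c l‖ := Aset_dist_ge hAz l (by omega)
      rcases lt_or_ge ‖(fc p c')^[m + i] z - (fc p c)^[m + i] z‖
          ‖(fc p c)^[m + i] z - c l‖ with hlt | hle2
      · have h5 : (fc p c')^[m + i] z - c l = ((fc p c)^[m + i] z - c l)
            + ((fc p c')^[m + i] z - (fc p c)^[m + i] z) := by ring
        rw [h5, na_add_eq hna hlt]
        exact hge
      · exfalso
        have h5 : ‖(fc p c)^[m + i] z - c l‖ < ‖(fc p c)^[m + i] z‖ :=
          lt_of_le_of_lt hle2 hdlt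
        have h6 : ‖c l‖ = ‖(fc p c)^[m + i] z‖ := by
          have h7 : c l = (fc p c)^[m + i] z
              + (-((fc p c)^[m + i] z - c l)) := by ring
          rw [h7, na_add_eq hna (by rwa [norm_neg])]
        have h8 : R l = ‖(fc p c)^[m + i] z‖ := by
          rw [← hc l (by omega)]; exact h6
        linarith
  · have h1 := hinv (m + n) le_rfl
    rw [mem_Bset_of_ne hk0]
    have h2 : (fc p c')^[m + n] z - c k = ((fc p c)^[m + n] z - c k)
        + ((fc p c')^[m + n] z - (fc p c)^[m + n] z) := by ring
    rw [h2]
    refine lt_of_le_of_lt (hna _ _) (max_lt hfinal ?_)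
    calc ‖(fc p c')^[m + n] z - (fc p c)^[m + n] z‖
        ≤ e * ‖(fc p c)^[m + n] z‖ := h1
      _ = e * R k := by rw [hfn]
      _ < R k := by nlinarith

end StepAux

/-- **Corollary 5.2.** For parameters `c, c' ∈ C(r)` with `|c_j - c'_j| < R_j` for all
`j ≥ 1` (so the disks `B_j` defined from `c` and from `c'` coincide), the cylinders
`C(B_0^m A^{n_k} B_k)` for `f_c` and `f_{c'}` coincide. -/
theorem cylinder_B0AB_stability
    (p : ℕ) [Fact p.Prime] (K : Type*) [NontriviallyNormedField K] [Algebra ℚ_[p] K]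
    (hK : IsCp p K) (R : ℕ → ℝ) (hR : IsGenericRadii p R)
    (k : ℕ) (hk : 1 ≤ k)
    (c : ℕ → K) (hc : InC p R c) (c' : ℕ → K) (hc' : InC p R c')
    (hclose : ∀ j, 1 ≤ j → ‖c j - c' j‖ < R j) :
    ∀ m : ℕ, 1 ≤ m → ∀ z : K,
      ((∀ i, i < m → (fc p c)^[i] z ∈ Bset R c 0) ∧
        (∀ i, i < nseq p R k → (fc p c)^[m + i] z ∈ Aset R c) ∧
        (fc p c)^[m + nseq p R k] z ∈ Bset R c k) ↔
      ((∀ i, i < m → (fc p c')^[i] z ∈ Bset R c 0) ∧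
        (∀ i, i < nseq p R k → (fc p c')^[m + i] z ∈ Aset R c) ∧
        (fc p c')^[m + nseq p R k] z ∈ Bset R c k) := by
  have hp : p.Prime := Fact.out
  haveI := hK.complete
  have hna := hK.isNonarch
  have hpn : ‖(p : K)‖ = (p : ℝ)⁻¹ := by
    have h1 := hK.norm_extends ((p : ℕ) : ℚ_[p])
    rw [map_natCast] at h1
    rw [h1, Padic.norm_p]
  have hRad : IsRadii p R := hR.1
  have hBeq : ∀ j : ℕ, Bset R c j = Bset R c' j := by
    intro j
    rcases Nat.eq_zero_or_pos j with rfl | hj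
    · simp [Bset]
    · have hj0 : j ≠ 0 := by omega
      ext x
      rw [mem_Bset_of_ne hj0, mem_Bset_of_ne hj0]
      constructor
      · intro h
        have h2 : x - c' j = (x - c j) + (c j - c' j) := by ring
        rw [h2]
        exact lt_of_le_of_lt (hna _ _) (max_lt h (hclose j hj))
      · intro h
        have h2 : x - c j = (x - c' j) + (c' j - c j) := by ring
        rw [h2]
        refine lt_of_le_of_lt (hna _ _) (max_lt h ?_)
        rw [norm_sub_rev]
        exact hclose j hj
  have hAeq : Aset R c = Aset R c' := by
    simp only [Aset]
    congr 1
    exact Set.iUnion_congr hBeq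
  intro m _hm z
  constructor
  · rintro ⟨H1, H2, H3⟩
    exact forward_dir hna hRad hk hc hc' hclose hpn m z H1 H2 H3
  · rintro ⟨H1, H2, H3⟩
    have hclose' : ∀ j, 1 ≤ j → ‖c' j - c j‖ < R j := by
      intro j hj
      rw [norm_sub_rev]
      exact hclose j hj
    have H1' : ∀ i, i < m → (fc p c')^[i] z ∈ Bset R c' 0 := by
      intro i hi
      rw [← hBeq 0]
      exact H1 i hi
    have H2' : ∀ i, i < nseq p R k → (fc p c')^[m + i] z ∈ Aset R c' := by
      intro i hi
      rw [← hAeq]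
      exact H2 i hi
    have H3' : (fc p c')^[m + nseq p R k] z ∈ Bset R c' k := by
      rw [← hBeq k]
      exact H3
    obtain ⟨G1, G2, G3⟩ := forward_dir hna hRad hk hc' hc hclose' hpn m z H1' H2' H3'
    exact ⟨fun i hi => by rw [hBeq 0]; exact G1 i hi,
      fun i hi => by rw [hAeq]; exact G2 i hi,
      by rw [hBeq k]; exact G3⟩
end
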